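/- arXiv:1112.3065 — 6 statements merged into one kernel-verified Lean document; each statement's English description precedes it below -/
import Mathlib

section
/- Let E be a finite-dimensional real inner product space and let (L¹ₙ)ₙ≥₀ and (L²ₙ)ₙ≥₀ be two sequences of continuous linear maps E → E. Assume that for some b > 0 and δ ∈ (0,1) one has ‖L¹ₙ − L²ₙ‖ ≤ δ·bⁿ for all n ≥ 0. Suppose there are two subspaces E¹ and E² of E and constants C⋆ > 1 and 0 < λ⋆ < μ⋆ with λ⋆ < b such that for each i ∈ {1,2} and all n ≥ 0: ‖Lⁱₙ v‖ ≤ C⋆·λ⋆ⁿ·‖v‖ for every v ∈ Eⁱ, and ‖Lⁱₙ w‖ ≥ C⋆⁻¹·μ⋆ⁿ·‖w‖ for every w orthogonal to Eⁱ. Then dist(E¹, E²) ≤ 3·C⋆²·(μ⋆/λ⋆)·δ^{(ln μ⋆ − ln λ⋆)/(ln b − ln λ⋆)}. -/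
/-!
Pick `n` with `δ * b ^ n ≈ lam ^ n`. At time `n` the two maps differ by at most `lam ^ n`, so a
vector of `E¹`, which `L¹ₙ` contracts at rate `lam`, is only mildly stretched by `L⁰ₙ`; its
component orthogonal to `E⁰` is expanded by `L⁰ₙ` at rate `mu`, hence has relative size at most
`3 C² (lam / mu) ^ n`, which is the Hölder bound. Bounding, symmetrically, how far each subspace
sticks out of the other controls `‖P₀ - P₁‖`.
-/

open scoped InnerProductSpace
open Real

theorem exists_mul_pow_le_pow_and_div_pow_le_rpow {b δ lam mu : ℝ} (hδ0 : 0 < δ) (hδ1 : δ < 1)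
    (hlam : 0 < lam) (hlammu : lam ≤ mu) (hlamb : lam < b) :
    ∃ n : ℕ, δ * b ^ n ≤ lam ^ n ∧
      (lam / mu) ^ n ≤ mu / lam * δ ^ ((log mu - log lam) / (log b - log lam)) := by
  have hmu : 0 < mu := hlam.trans_le hlammu
  have hb : 0 < b := hlam.trans hlamb
  have hκ : 0 < log b - log lam := sub_pos.2 (log_lt_log hlam hlamb)
  have hD : 0 ≤ log mu - log lam := sub_nonneg.2 (log_le_log hlam hlammu)
  -- `n := ⌊t⌋₊`, where `δ = (lam / b) ^ t`
  set t := -log δ / (log b - log lam) with ht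
  have htκ : t * (log b - log lam) = -log δ := div_mul_cancel₀ _ hκ.ne'
  have ht0 : 0 ≤ t := div_nonneg (neg_nonneg.2 (log_nonpos hδ0.le hδ1.le)) hκ.le
  refine ⟨⌊t⌋₊, ?_, ?_⟩
  · rw [← log_le_log_iff (by positivity) (by positivity), log_mul hδ0.ne' (by positivity),
      log_pow, log_pow]
    nlinarith [Nat.floor_le ht0]
  · rw [← log_le_log_iff (by positivity) (by positivity), log_mul (by positivity) (by positivity),
      log_pow, log_rpow hδ0, log_div hlam.ne' hmu.ne', log_div hmu.ne' hlam.ne']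
    have : (log mu - log lam) / (log b - log lam) * log δ = -(t * (log mu - log lam)) := by
      rw [ht]; field_simp
    nlinarith [Nat.lt_floor_add_one t]

namespace Submodule

variable {𝕜 E : Type*} [RCLike 𝕜] [NormedAddCommGroup E] [InnerProductSpace 𝕜 E]

theorem mul_norm_sub_starProjection_le {U : Submodule 𝕜 E} [U.HasOrthogonalProjection]
    {A B : E →L[𝕜] E} {c e ε : ℝ} (hc : 0 ≤ c) (hAB : ‖A - B‖ ≤ ε)
    (hA : ∀ u ∈ U, ‖A u‖ ≤ c * ‖u‖) (hA' : ∀ w ∈ Uᗮ, e * ‖w‖ ≤ ‖A w‖)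
    {v : E} (hB : ‖B v‖ ≤ c * ‖v‖) :
    e * ‖v - U.starProjection v‖ ≤ (2 * c + ε) * ‖v‖ := by
  have hAv : ‖A v‖ ≤ (c + ε) * ‖v‖ := calc
    ‖A v‖ = ‖B v + (A - B) v‖ := by simp
    _ ≤ c * ‖v‖ + ε * ‖v‖ := norm_add_le_of_le hB ((A - B).le_of_opNorm_le hAB v)
    _ = (c + ε) * ‖v‖ := by ring
  have hAPv : ‖A (U.starProjection v)‖ ≤ c * ‖v‖ :=
    (hA _ (U.starProjection_apply_mem v)).trans
      (mul_le_mul_of_nonneg_left (U.norm_starProjection_apply_le v) hc)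
  calc e * ‖v - U.starProjection v‖ ≤ ‖A (v - U.starProjection v)‖ :=
        hA' _ (U.sub_starProjection_mem_orthogonal v)
    _ ≤ ‖A v‖ + ‖A (U.starProjection v)‖ := by rw [map_sub]; exact norm_sub_le _ _
    _ ≤ (2 * c + ε) * ‖v‖ := by linarith

theorem norm_sub_starProjection_le_of_pow_bounds {U : Submodule 𝕜 E} [U.HasOrthogonalProjection]
    {A B : ℕ → E →L[𝕜] E} {b δ C lam mu : ℝ} (hδ0 : 0 < δ) (hδ1 : δ < 1) (hC : 1 ≤ C)
    (hlam : 0 < lam) (hlammu : lam ≤ mu) (hlamb : lam < b)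
    (hAB : ∀ n, ‖A n - B n‖ ≤ δ * b ^ n)
    (hA : ∀ n, ∀ u ∈ U, ‖A n u‖ ≤ C * lam ^ n * ‖u‖)
    (hA' : ∀ n, ∀ w ∈ Uᗮ, C⁻¹ * mu ^ n * ‖w‖ ≤ ‖A n w‖)
    {v : E} (hB : ∀ n, ‖B n v‖ ≤ C * lam ^ n * ‖v‖) :
    ‖v - U.starProjection v‖ ≤
      3 * C ^ 2 * (mu / lam) * δ ^ ((log mu - log lam) / (log b - log lam)) * ‖v‖ := by
  obtain ⟨n, hδn, hn⟩ := exists_mul_pow_le_pow_and_div_pow_le_rpow hδ0 hδ1 hlam hlammu hlamb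
  have hC0 : 0 < C := one_pos.trans_le hC
  have hmu : 0 < mu := hlam.trans_le hlammu
  have hAw := mul_norm_sub_starProjection_le (by positivity) (hAB n) (hA n) (hA' n) (hB n)
  have hε : δ * b ^ n ≤ C * lam ^ n := hδn.trans (le_mul_of_one_le_left (by positivity) hC)
  have hw : ‖v - U.starProjection v‖ ≤ 3 * C ^ 2 * (lam / mu) ^ n * ‖v‖ := by
    rw [← mul_le_mul_iff_right₀ (by positivity : 0 < C⁻¹ * mu ^ n)]
    calc C⁻¹ * mu ^ n * ‖v - U.starProjection v‖ ≤ (2 * (C * lam ^ n) + δ * b ^ n) * ‖v‖ := hAw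
      _ ≤ 3 * (C * lam ^ n) * ‖v‖ := by gcongr; linarith
      _ = C⁻¹ * mu ^ n * (3 * C ^ 2 * (lam / mu) ^ n * ‖v‖) := by rw [div_pow]; field_simp
  calc ‖v - U.starProjection v‖ ≤ 3 * C ^ 2 * (lam / mu) ^ n * ‖v‖ := hw
    _ ≤ 3 * C ^ 2 * (mu / lam * δ ^ ((log mu - log lam) / (log b - log lam))) * ‖v‖ := by gcongr
    _ = _ := by ring

variable {U V : Submodule 𝕜 E} [U.HasOrthogonalProjection] [V.HasOrthogonalProjection] {r : ℝ}

theorem norm_starProjection_apply_le_of_mem_orthogonal (hr : 0 ≤ r)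
    (hUV : ∀ u ∈ U, ‖u - V.starProjection u‖ ≤ r * ‖u‖) {y : E} (hy : y ∈ Vᗮ) :
    ‖U.starProjection y‖ ≤ r * ‖y‖ := by
  set p := U.starProjection y
  have hp : ‖p‖ * ‖p‖ ≤ ‖p‖ * (r * ‖y‖) := calc
    ‖p‖ * ‖p‖ = RCLike.re ⟪p, y⟫_𝕜 := by
      rw [← sq, U.re_inner_starProjection_eq_normSq]; rfl
    _ = RCLike.re ⟪p - V.starProjection p, y⟫_𝕜 := by
      rw [inner_sub_left, inner_right_of_mem_orthogonal (V.starProjection_apply_mem p) hy,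
        sub_zero]
    _ ≤ ‖p - V.starProjection p‖ * ‖y‖ := re_inner_le_norm _ _
    _ ≤ r * ‖p‖ * ‖y‖ :=
      mul_le_mul_of_nonneg_right (hUV p (U.starProjection_apply_mem y)) (norm_nonneg y)
    _ = ‖p‖ * (r * ‖y‖) := by ring
  rcases (norm_nonneg p).eq_or_lt with hp0 | hp0
  · rw [← hp0]; positivity
  · exact le_of_mul_le_mul_left hp hp0

theorem norm_starProjection_sub_starProjection_le (hr : 0 ≤ r)
    (hUV : ∀ u ∈ U, ‖u - V.starProjection u‖ ≤ r * ‖u‖)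
    (hVU : ∀ v ∈ V, ‖v - U.starProjection v‖ ≤ r * ‖v‖) :
    ‖U.starProjection - V.starProjection‖ ≤ r := by
  refine ContinuousLinearMap.opNorm_le_bound _ hr fun x ↦ ?_
  set q := V.starProjection x
  set y := x - q
  have hsplit : (U.starProjection - V.starProjection) x =
      U.starProjection y - (q - U.starProjection q) := by
    simp only [sub_apply, y, map_sub]; abel
  have horth : ⟪U.starProjection y, q - U.starProjection q⟫_𝕜 = 0 :=
    inner_right_of_mem_orthogonal (U.starProjection_apply_mem y)
      (U.sub_starProjection_mem_orthogonal q)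
  have hy : ‖U.starProjection y‖ ≤ r * ‖y‖ :=
    norm_starProjection_apply_le_of_mem_orthogonal hr hUV (V.sub_starProjection_mem_orthogonal x)
  have hq : ‖q - U.starProjection q‖ ≤ r * ‖q‖ := hVU q (V.starProjection_apply_mem x)
  have hx : ‖x‖ ^ 2 = ‖q‖ ^ 2 + ‖y‖ ^ 2 := by
    rw [V.norm_sq_eq_add_norm_sq_starProjection x, V.starProjection_orthogonal_val]
  rw [← pow_le_pow_iff_left₀ (norm_nonneg _) (by positivity) two_ne_zero, hsplit,
    @norm_sub_sq 𝕜, horth, map_zero, mul_zero, sub_zero, mul_pow, hx]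
  nlinarith [norm_nonneg (U.starProjection y), norm_nonneg (q - U.starProjection q)]

end Submodule

theorem brin_stuck_subspace_perturbation_general
    {E : Type*} [NormedAddCommGroup E] [InnerProductSpace ℝ E] [FiniteDimensional ℝ E]
    (L : Fin 2 → ℕ → E →L[ℝ] E) (b δ : ℝ) (hδ : δ ∈ Set.Ioo (0 : ℝ) 1)
    (hclose : ∀ n : ℕ, ‖L 0 n - L 1 n‖ ≤ δ * b ^ n)
    (Esub : Fin 2 → Submodule ℝ E) (Cs lam mu : ℝ)
    (hCs : 1 < Cs) (hlam : 0 < lam) (hlammu : lam < mu) (hlamb : lam < b)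
    (hcontr : ∀ i : Fin 2, ∀ n : ℕ, ∀ v ∈ Esub i, ‖L i n v‖ ≤ Cs * lam ^ n * ‖v‖)
    (hexpand : ∀ i : Fin 2, ∀ n : ℕ, ∀ w ∈ (Esub i)ᗮ, Cs⁻¹ * mu ^ n * ‖w‖ ≤ ‖L i n w‖) :
    ‖(Esub 0).subtypeL.comp (Submodule.orthogonalProjectionOnto (Esub 0)) -
        (Esub 1).subtypeL.comp (Submodule.orthogonalProjectionOnto (Esub 1))‖ ≤
      3 * Cs ^ 2 * (mu / lam) *
        δ ^ ((Real.log mu - Real.log lam) / (Real.log b - Real.log lam)) := by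
  obtain ⟨hδ0, hδ1⟩ := hδ
  have hmu : 0 < mu := hlam.trans hlammu
  have hr : 0 ≤ 3 * Cs ^ 2 * (mu / lam) *
      δ ^ ((Real.log mu - Real.log lam) / (Real.log b - Real.log lam)) := by positivity
  have h10 (v : E) (hv : v ∈ Esub 1) := Submodule.norm_sub_starProjection_le_of_pow_bounds
    hδ0 hδ1 hCs.le hlam hlammu.le hlamb hclose (hcontr 0) (hexpand 0) (hcontr 1 · v hv)
  have h01 (v : E) (hv : v ∈ Esub 0) := Submodule.norm_sub_starProjection_le_of_pow_bounds
    hδ0 hδ1 hCs.le hlam hlammu.le hlamb (fun n ↦ (norm_sub_rev _ _).trans_le (hclose n))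
    (hcontr 1) (hexpand 1) (hcontr 0 · v hv)
  exact Submodule.norm_starProjection_sub_starProjection_le hr h01 h10

/-- Brin–Stuck subspace perturbation lemma (Lemma B.2 of the paper). -/
theorem brin_stuck_subspace_perturbation
    {E : Type*} [NormedAddCommGroup E] [InnerProductSpace ℝ E] [FiniteDimensional ℝ E]
    (L : Fin 2 → ℕ → E →L[ℝ] E) (b δ : ℝ) (hb : 0 < b) (hδ : δ ∈ Set.Ioo (0 : ℝ) 1)
    (hclose : ∀ n : ℕ, ‖L 0 n - L 1 n‖ ≤ δ * b ^ n)
    (Esub : Fin 2 → Submodule ℝ E) (Cs lam mu : ℝ)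
    (hCs : 1 < Cs) (hlam : 0 < lam) (hlammu : lam < mu) (hlamb : lam < b)
    (hcontr : ∀ i : Fin 2, ∀ n : ℕ, ∀ v ∈ Esub i, ‖L i n v‖ ≤ Cs * lam ^ n * ‖v‖)
    (hexpand : ∀ i : Fin 2, ∀ n : ℕ, ∀ w ∈ (Esub i)ᗮ, Cs⁻¹ * mu ^ n * ‖w‖ ≤ ‖L i n w‖) :
    ‖(Esub 0).subtypeL.comp (Submodule.orthogonalProjectionOnto (Esub 0)) -
        (Esub 1).subtypeL.comp (Submodule.orthogonalProjectionOnto (Esub 1))‖ ≤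
      3 * Cs ^ 2 * (mu / lam) *
        δ ^ ((Real.log mu - Real.log lam) / (Real.log b - Real.log lam)) :=
  brin_stuck_subspace_perturbation_general L b δ hδ hclose Esub Cs lam mu hCs hlam hlammu hlamb
    hcontr hexpand
end

section
/- Let A and B be one-dimensional subspaces of a finite-dimensional real inner product space. Then dist'(A,B) ≤ √2 · dist(A,B)^{1/2}. -/
/-!
Choose unit vectors `a ∈ A`, `b ∈ B` with `t = ⟪b, a⟫ ≥ 0`. Then `‖a - b‖² = 2(1 - t)`, while
`(P_A - P_B) a = a - t • b` has norm `√(1 - t²)`. Since `(1 - t)² ≤ 1 - t²` for `0 ≤ t ≤ 1`,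
`‖a - b‖² ≤ 2 ‖(P_A - P_B) a‖ ≤ 2 ‖P_A - P_B‖`.
-/

open Submodule RealInnerProductSpace

section

variable {E : Type*} [NormedAddCommGroup E] [InnerProductSpace ℝ E]

theorem exists_norm_eq_one_inner_nonneg_eq_span_of_finrank_eq_one {A : Submodule ℝ E}
    (hA : Module.finrank ℝ A = 1) (x : E) : ∃ a, ‖a‖ = 1 ∧ 0 ≤ ⟪a, x⟫ ∧ A = ℝ ∙ a := by
  obtain ⟨v, hvA, hv0⟩ := A.exists_mem_ne_zero_of_ne_bot (by rintro rfl; simp at hA)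
  set u := ‖v‖⁻¹ • v
  have hu : ‖u‖ = 1 := norm_smul_inv_norm hv0
  have hu0 : u ≠ 0 := norm_ne_zero_iff.mp (by simp [hu])
  have huA : u ∈ A := A.smul_mem _ hvA
  rcases le_total 0 ⟪u, x⟫ with h | h
  · exact ⟨u, hu, h, eq_span_singleton_of_mem_of_finrank_eq_one hA huA hu0⟩
  · exact ⟨-u, by rwa [norm_neg], by rwa [inner_neg_left, neg_nonneg],
      eq_span_singleton_of_mem_of_finrank_eq_one hA (A.neg_mem huA) (neg_ne_zero.mpr hu0)⟩

theorem norm_sub_inner_smul_sq {b : E} (hb : ‖b‖ = 1) (a : E) :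
    ‖a - ⟪b, a⟫ • b‖ ^ 2 = ‖a‖ ^ 2 - ⟪b, a⟫ ^ 2 := by
  rw [norm_sub_sq_real, inner_smul_right, norm_smul, Real.norm_eq_abs, mul_pow, sq_abs, hb,
    real_inner_comm]
  ring

theorem norm_sub_sq_le_two_mul_norm_sub_inner_smul {a b : E} (ha : ‖a‖ = 1) (hb : ‖b‖ = 1)
    (hab : 0 ≤ ⟪b, a⟫) : ‖a - b‖ ^ 2 ≤ 2 * ‖a - ⟪b, a⟫ • b‖ := by
  have hab_le : ⟪b, a⟫ ≤ 1 := by simpa [ha, hb] using real_inner_le_norm b a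
  have hsub : ‖a - b‖ ^ 2 = 2 * (1 - ⟪b, a⟫) := by
    rw [norm_sub_sq_real, ha, hb, real_inner_comm]
    ring
  have hproj : 1 - ⟪b, a⟫ ≤ ‖a - ⟪b, a⟫ • b‖ := by
    rw [← Real.sqrt_sq (norm_nonneg _), norm_sub_inner_smul_sq hb, ha]
    exact Real.le_sqrt_of_sq_le (by nlinarith)
  linarith

end

/-- Comparison of the two subspace distances for one-dimensional subspaces
(Appendix A of the paper): dist'(A,B) ≤ √2 · dist(A,B)^{1/2}. -/
theorem dist'_le_sqrt_two_mul_sqrt_dist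
    {E : Type*} [NormedAddCommGroup E] [InnerProductSpace ℝ E] [FiniteDimensional ℝ E]
    (A B : Submodule ℝ E) (hA : Module.finrank ℝ A = 1) (hB : Module.finrank ℝ B = 1) :
    sInf {r : ℝ | ∃ u ∈ A, ∃ v ∈ B, ‖u‖ = 1 ∧ ‖v‖ = 1 ∧ r = ‖u - v‖} ≤
      Real.sqrt 2 *
        Real.sqrt ‖A.subtypeL.comp A.orthogonalProjectionOnto -
            B.subtypeL.comp B.orthogonalProjectionOnto‖ := by
  obtain ⟨a, ha, -, rfl⟩ := exists_norm_eq_one_inner_nonneg_eq_span_of_finrank_eq_one hA 0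
  obtain ⟨b, hb, hab, rfl⟩ := exists_norm_eq_one_inner_nonneg_eq_span_of_finrank_eq_one hB a
  set D := (ℝ ∙ a).subtypeL.comp (ℝ ∙ a).orthogonalProjectionOnto -
    (ℝ ∙ b).subtypeL.comp (ℝ ∙ b).orthogonalProjectionOnto
  have hDa : D a = a - ⟪b, a⟫ • b := by
    change (ℝ ∙ a).starProjection a - (ℝ ∙ b).starProjection a = _
    rw [starProjection_eq_self_iff.mpr (mem_span_singleton_self a),
      starProjection_unit_singleton ℝ hb]
  have hkey : ‖a - b‖ ^ 2 ≤ 2 * ‖D‖ :=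
    calc ‖a - b‖ ^ 2 ≤ 2 * ‖D a‖ := hDa ▸ norm_sub_sq_le_two_mul_norm_sub_inner_smul ha hb hab
      _ ≤ 2 * ‖D‖ := by simpa [ha] using D.le_opNorm a
  calc sInf _ ≤ ‖a - b‖ :=
        csInf_le ⟨0, by rintro r ⟨-, -, -, -, -, -, rfl⟩; positivity⟩
          (by exact ⟨a, mem_span_singleton_self a, b, mem_span_singleton_self b, ha, hb, rfl⟩)
    _ = √(‖a - b‖ ^ 2) := (Real.sqrt_sq (norm_nonneg _)).symm
    _ ≤ √(2 * ‖D‖) := Real.sqrt_le_sqrt hkey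
    _ = √2 * √‖D‖ := Real.sqrt_mul zero_le_two _
end

section
/- Let γ : [0,ℓ] → ℝ^M be twice continuously differentiable with ‖γ'(t)‖ = 1 and ‖γ''(t)‖ ≤ K for all t ∈ [0,ℓ]. Let F : ℝ^M → ℝ^M be twice continuously differentiable with ‖DF(x)‖ ≤ b₁ and ‖D²F(x)‖ ≤ b₂ for all x, and set J(t) = ‖DF(γ(t)) γ'(t)‖. If J(t) ≥ j > 0 for all t ∈ [0,ℓ], then |ln J(s) − ln J(t)| ≤ ((b₂ + b₁·K)/j)·|s − t| for all s, t ∈ [0,ℓ]. -/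
/-!
Differentiating `J(t) = ‖DF(γ t) γ'(t)‖` along the curve, the vector `DF(γ t) γ'(t)` has
derivative `D²F(γ t)(γ' t, γ' t) + DF(γ t) γ''(t)`, of norm at most `b₂ + b₁ K`; by the mean
value inequality `J` is `(b₂ + b₁ K)`-Lipschitz. Since `log` is `1/j`-Lipschitz on `[j, ∞)`,
`log J` is `(b₂ + b₁ K)/j`-Lipschitz.
-/

open Real in
theorem abs_log_sub_log_le_div {j a b : ℝ} (hj : 0 < j) (ha : j ≤ a) (hb : j ≤ b) :
    |log a - log b| ≤ |a - b| / j := by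
  wlog hba : b ≤ a generalizing a b
  · rw [abs_sub_comm, abs_sub_comm a b]
    exact this hb ha (le_of_not_ge hba)
  have hb₀ : 0 < b := hj.trans_le hb
  have ha₀ : 0 < a := hb₀.trans_le hba
  rw [abs_of_nonneg (sub_nonneg.2 (log_le_log hb₀ hba)), abs_of_nonneg (sub_nonneg.2 hba)]
  calc log a - log b = log (a / b) := (log_div ha₀.ne' hb₀.ne').symm
    _ ≤ a / b - 1 := log_le_sub_one_of_pos (div_pos ha₀ hb₀)
    _ = (a - b) / b := by field_simp
    _ ≤ (a - b) / j := by gcongr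

section

variable {E F : Type*} [NormedAddCommGroup E] [NormedSpace ℝ E]
  [NormedAddCommGroup F] [NormedSpace ℝ F]

theorem norm_clm_apply_apply_add_le (A' : E →L[ℝ] E →L[ℝ] F) (A : E →L[ℝ] F) (w z : E) :
    ‖A' w w + A z‖ ≤ ‖A'‖ * ‖w‖ ^ 2 + ‖A‖ * ‖z‖ :=
  calc ‖A' w w + A z‖ ≤ ‖A' w w‖ + ‖A z‖ := norm_add_le _ _
    _ ≤ ‖A'‖ * ‖w‖ * ‖w‖ + ‖A‖ * ‖z‖ := by
      gcongr
      · exact (A' w).le_opNorm w |>.trans (by gcongr; exact A'.le_opNorm w)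
      · exact A.le_opNorm z
    _ = ‖A'‖ * ‖w‖ ^ 2 + ‖A‖ * ‖z‖ := by ring

theorem norm_clm_apply_tangent_sub_le {s : Set ℝ} (hs : Convex ℝ s)
    {A : E → E →L[ℝ] F} {A' : E → E →L[ℝ] E →L[ℝ] F} {γ γ' γ'' : ℝ → E} {K b₁ b₂ : ℝ}
    (hA : ∀ x, HasFDerivAt A (A' x) x) (hb₁ : ∀ x, ‖A x‖ ≤ b₁) (hb₂ : ∀ x, ‖A' x‖ ≤ b₂)
    (hγ : ∀ t ∈ s, HasDerivAt γ (γ' t) t) (hγ' : ∀ t ∈ s, HasDerivAt γ' (γ'' t) t)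
    (hunit : ∀ t ∈ s, ‖γ' t‖ = 1) (hK : ∀ t ∈ s, ‖γ'' t‖ ≤ K)
    {a b : ℝ} (ha : a ∈ s) (hb : b ∈ s) :
    ‖A (γ a) (γ' a) - A (γ b) (γ' b)‖ ≤ (b₂ + b₁ * K) * |a - b| := by
  have hderiv : ∀ t ∈ s, HasDerivAt (fun u ↦ A (γ u) (γ' u))
      (A' (γ t) (γ' t) (γ' t) + A (γ t) (γ'' t)) t := fun t ht ↦
    ((hA (γ t)).comp_hasDerivAt t (hγ t ht)).clm_apply (hγ' t ht)
  have hbound : ∀ t ∈ s, ‖A' (γ t) (γ' t) (γ' t) + A (γ t) (γ'' t)‖ ≤ b₂ + b₁ * K := by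
    intro t ht
    have hb₁₀ : 0 ≤ b₁ := (norm_nonneg _).trans (hb₁ (γ t))
    calc _ ≤ ‖A' (γ t)‖ * ‖γ' t‖ ^ 2 + ‖A (γ t)‖ * ‖γ'' t‖ := norm_clm_apply_apply_add_le _ _ _ _
      _ ≤ b₂ * 1 ^ 2 + b₁ * K := by
        rw [hunit t ht]; gcongr
        exacts [hb₂ _, hb₁ _, hK t ht]
      _ = b₂ + b₁ * K := by ring
  simpa only [Real.norm_eq_abs] using
    hs.norm_image_sub_le_of_norm_hasDerivWithin_le (fun t ht ↦ (hderiv t ht).hasDerivWithinAt)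
      hbound hb ha

end

theorem log_jacobian_distortion_general
    {M : ℕ} (ℓ K b₁ b₂ j : ℝ)
    (γ γ' γ'' : ℝ → EuclideanSpace ℝ (Fin M))
    (F : EuclideanSpace ℝ (Fin M) → EuclideanSpace ℝ (Fin M))
    (hγ : ∀ t ∈ Set.Icc 0 ℓ, HasDerivAt γ (γ' t) t)
    (hγ' : ∀ t ∈ Set.Icc 0 ℓ, HasDerivAt γ' (γ'' t) t)
    (hunit : ∀ t ∈ Set.Icc 0 ℓ, ‖γ' t‖ = 1)
    (hK : ∀ t ∈ Set.Icc 0 ℓ, ‖γ'' t‖ ≤ K)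
    (hF : ContDiff ℝ 2 F)
    (hb₁ : ∀ x, ‖fderiv ℝ F x‖ ≤ b₁)
    (hb₂ : ∀ x, ‖fderiv ℝ (fderiv ℝ F) x‖ ≤ b₂)
    (hj : 0 < j)
    (hJ : ∀ t ∈ Set.Icc 0 ℓ, j ≤ ‖fderiv ℝ F (γ t) (γ' t)‖) :
    ∀ s ∈ Set.Icc 0 ℓ, ∀ t ∈ Set.Icc 0 ℓ,
      |Real.log ‖fderiv ℝ F (γ s) (γ' s)‖ - Real.log ‖fderiv ℝ F (γ t) (γ' t)‖| ≤
        ((b₂ + b₁ * K) / j) * |s - t| := by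
  intro s hs t ht
  have hDF : ∀ x, HasFDerivAt (fderiv ℝ F) (fderiv ℝ (fderiv ℝ F) x) x := fun x ↦
    ((hF.fderiv_right (by norm_num)).differentiable one_ne_zero x).hasFDerivAt
  have hlip := norm_clm_apply_tangent_sub_le (convex_Icc 0 ℓ) hDF hb₁ hb₂ hγ hγ' hunit hK hs ht
  calc _ ≤ |‖fderiv ℝ F (γ s) (γ' s)‖ - ‖fderiv ℝ F (γ t) (γ' t)‖| / j :=
        abs_log_sub_log_le_div hj (hJ s hs) (hJ t ht)
    _ ≤ (b₂ + b₁ * K) * |s - t| / j := by gcongr; exact (abs_norm_sub_norm_le _ _).trans hlip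
    _ = (b₂ + b₁ * K) / j * |s - t| := by ring

/-- The single-map distortion estimate at the core of Lemma 2.3 of the paper: for a
unit-speed C² curve `γ` of curvature at most `K` and a C² map `F` with `‖DF‖ ≤ b₁`,
`‖D²F‖ ≤ b₂`, the Jacobian `J(t) = ‖DF(γ t)(γ' t)‖`, when bounded below by `j > 0`,
satisfies `|ln J(s) - ln J(t)| ≤ ((b₂ + b₁ K)/j) |s - t|`. -/
theorem log_jacobian_distortion
    {M : ℕ} (ℓ K b₁ b₂ j : ℝ) (hℓ : 0 ≤ ℓ)
    (γ γ' γ'' : ℝ → EuclideanSpace ℝ (Fin M))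
    (F : EuclideanSpace ℝ (Fin M) → EuclideanSpace ℝ (Fin M))
    (hγ : ∀ t ∈ Set.Icc 0 ℓ, HasDerivAt γ (γ' t) t)
    (hγ' : ∀ t ∈ Set.Icc 0 ℓ, HasDerivAt γ' (γ'' t) t)
    (hγ''cont : ContinuousOn γ'' (Set.Icc 0 ℓ))
    (hunit : ∀ t ∈ Set.Icc 0 ℓ, ‖γ' t‖ = 1)
    (hK : ∀ t ∈ Set.Icc 0 ℓ, ‖γ'' t‖ ≤ K)
    (hF : ContDiff ℝ 2 F)
    (hb₁ : ∀ x, ‖fderiv ℝ F x‖ ≤ b₁)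
    (hb₂ : ∀ x, ‖fderiv ℝ (fderiv ℝ F) x‖ ≤ b₂)
    (hj : 0 < j)
    (hJ : ∀ t ∈ Set.Icc 0 ℓ, j ≤ ‖fderiv ℝ F (γ t) (γ' t)‖) :
    ∀ s ∈ Set.Icc 0 ℓ, ∀ t ∈ Set.Icc 0 ℓ,
      |Real.log ‖fderiv ℝ F (γ s) (γ' s)‖ - Real.log ‖fderiv ℝ F (γ t) (γ' t)‖| ≤
        ((b₂ + b₁ * K) / j) * |s - t| :=
  log_jacobian_distortion_general ℓ K b₁ b₂ j γ γ' γ'' F hγ hγ' hunit hK hF hb₁ hb₂ hj hJ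
end

section
/- Let (X, d_X) and (Y, d_Y) be metric spaces, g : Y → X a map, ρ : X → (0,∞) and J : Y → (0,∞) functions, and let η ∈ (0,1], C_r ≥ 0, C_d ≥ 0, θ > 0, L > 0 be constants. Assume: (i) d_X(g x, g y) ≤ θ·d_Y(x, y) for all x, y ∈ Y; (ii) |ln ρ(a) − ln ρ(b)| ≤ C_r·d_X(a,b)^η for all a, b ∈ X; (iii) |ln J(x) − ln J(y)| ≤ C_d·d_Y(x,y) for all x, y ∈ Y; (iv) d_Y(x,y) ≤ L for all x, y ∈ Y. Then the function ρ'(x) := J(x)·ρ(g(x)) satisfies |ln ρ'(x) − ln ρ'(y)| ≤ (C_r·θ^η + C_d·L^{1−η})·d_Y(x,y)^η for all x, y ∈ Y. -/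
/-- Regularity propagation for densities (core of the proof of Lemma 2.4 of the paper):
if `g` contracts by `θ`, `ln ρ` is `η`-Hölder with constant `C_r`, `ln J` is Lipschitz
with constant `C_d`, and `Y` has diameter at most `L`, then
`ρ'(x) = J(x)·ρ(g x)` has `η`-Hölder logarithm with constant `C_r θ^η + C_d L^{1-η}`. -/
theorem density_regularity_propagation
    {X Y : Type*} [MetricSpace X] [MetricSpace Y]
    (g : Y → X) (ρ : X → ℝ) (J : Y → ℝ)
    (hρpos : ∀ a, 0 < ρ a) (hJpos : ∀ x, 0 < J x)
    (η Cr Cd θ L : ℝ) (hη : η ∈ Set.Ioc (0 : ℝ) 1) (hCr : 0 ≤ Cr) (hCd : 0 ≤ Cd)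
    (hθ : 0 < θ) (hL : 0 < L)
    (hg : ∀ x y : Y, dist (g x) (g y) ≤ θ * dist x y)
    (hρ : ∀ a b : X, |Real.log (ρ a) - Real.log (ρ b)| ≤ Cr * dist a b ^ η)
    (hJ : ∀ x y : Y, |Real.log (J x) - Real.log (J y)| ≤ Cd * dist x y)
    (hdiam : ∀ x y : Y, dist x y ≤ L) :
    ∀ x y : Y, |Real.log (J x * ρ (g x)) - Real.log (J y * ρ (g y))| ≤
      (Cr * θ ^ η + Cd * L ^ (1 - η)) * dist x y ^ η := by
  obtain ⟨hη0, hη1⟩ := hη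
  intro x y
  have hd : (0:ℝ) ≤ dist x y := dist_nonneg
  rw [Real.log_mul (hJpos x).ne' (hρpos (g x)).ne',
      Real.log_mul (hJpos y).ne' (hρpos (g y)).ne']
  have h1 : |Real.log (J x) - Real.log (J y)| ≤ Cd * L ^ (1 - η) * dist x y ^ η := by
    refine (hJ x y).trans ?_
    have : dist x y = dist x y ^ (1 - η) * dist x y ^ η := by
      rw [← Real.rpow_add' hd (by norm_num)]; simp
    have h2 : dist x y ^ (1 - η) ≤ L ^ (1 - η) :=
      Real.rpow_le_rpow hd (hdiam x y) (by linarith)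
    calc Cd * dist x y = Cd * (dist x y ^ (1 - η) * dist x y ^ η) := by rw [← this]
      _ ≤ Cd * (L ^ (1 - η) * dist x y ^ η) := by
          apply mul_le_mul_of_nonneg_left
          · exact mul_le_mul_of_nonneg_right h2 (Real.rpow_nonneg hd η)
          · exact hCd
      _ = Cd * L ^ (1 - η) * dist x y ^ η := by ring
  have h2 : |Real.log (ρ (g x)) - Real.log (ρ (g y))| ≤ Cr * θ ^ η * dist x y ^ η := by
    refine (hρ (g x) (g y)).trans ?_
    have h3 : dist (g x) (g y) ^ η ≤ (θ * dist x y) ^ η :=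
      Real.rpow_le_rpow dist_nonneg (hg x y) hη0.le
    rw [Real.mul_rpow hθ.le hd] at h3
    calc Cr * dist (g x) (g y) ^ η ≤ Cr * (θ ^ η * dist x y ^ η) :=
          mul_le_mul_of_nonneg_left h3 hCr
      _ = Cr * θ ^ η * dist x y ^ η := by ring
  calc |Real.log (J x) + Real.log (ρ (g x)) - (Real.log (J y) + Real.log (ρ (g y)))|
      ≤ |Real.log (J x) - Real.log (J y)| + |Real.log (ρ (g x)) - Real.log (ρ (g y))| := by
        rw [add_sub_add_comm]; exact abs_add_le _ _
    _ ≤ Cd * L ^ (1 - η) * dist x y ^ η + Cr * θ ^ η * dist x y ^ η := add_le_add h1 h2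
    _ = (Cr * θ ^ η + Cd * L ^ (1 - η)) * dist x y ^ η := by ring
end

section
/- Let (X, m₁) and (Y, m₂) be σ-finite measure spaces and let h : X → Y be a measurable equivalence. Let J : X → (0,∞) be measurable with m₂ equal to the pushforward under h of the measure J·m₁. Let ρ₁ : X → [0,∞) and ρ₂ : Y → (0,∞) be measurable, let τ_α > 0, and let τ_β : Y → [0,∞) be measurable and satisfy τ_β(h x)·ρ₂(h x) = τ_α·ρ₁(x)/J(x) for all x ∈ X. Define Θ : X × ℝ → Y × ℝ by Θ(x, t) = (h x, (τ_β(h x)/τ_α)·t). Then the pushforward under Θ of the product measure (ρ₁·m₁) ⊗ Leb restricted to {(x,t) : 0 ≤ t ≤ τ_α} equals the product measure (ρ₂·m₂) ⊗ Leb restricted to {(y,s) : 0 ≤ s ≤ τ_β(y)}. -/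
/-!
Write `c x = τ_β(h x)/τ_α`. Then `Θ` is the fibrewise scaling `(x, t) ↦ (x, c x * t)` followed by
`h × id`. On the fibre over `x` the scaling divides Lebesgue measure by `c x` and maps `[0, τ_α]`
onto `[0, τ_β(h x)]`, so it carries `(c·ν) ⊗ Leb` under height `τ_α` to `ν ⊗ Leb` under height
`τ_β ∘ h`, where `ν = (J · ρ₂ ∘ h)·m₁`. The consistency rule says precisely `ρ₁·m₁ = c·ν`, and
`h_* ν = ρ₂·m₂` because `m₂ = h_*(J·m₁)`, so `h × id` finishes the job.
-/

open MeasureTheory Set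

-- For `c ≤ 0` both sides vanish, which covers the fibres where `τ_β` is zero.
lemma ofReal_mul_volume_preimage_mul_inter_Icc {c a : ℝ} (ha : 0 ≤ a) (S : Set ℝ) :
    ENNReal.ofReal c * volume ((c * ·) ⁻¹' S ∩ Icc 0 a) = volume (S ∩ Icc 0 (c * a)) := by
  rcases le_or_gt c 0 with hc | hc
  · have hnull : volume (S ∩ Icc 0 (c * a)) = 0 :=
      measure_mono_null
        (inter_subset_right.trans (Icc_subset_Icc_right (mul_nonpos_of_nonpos_of_nonneg hc ha)))
        (by simp)
    rw [ENNReal.ofReal_of_nonpos hc, zero_mul, hnull]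
  · have hpre : (c * ·) ⁻¹' S ∩ Icc 0 a = (c * ·) ⁻¹' (S ∩ Icc 0 (c * a)) := by
      rw [preimage_inter, preimage_const_mul_Icc₀ _ _ hc, zero_div, mul_div_cancel_left₀ _ hc.ne']
    rw [hpre, Real.volume_preimage_mul_left hc.ne', abs_inv, abs_of_pos hc, ← mul_assoc,
      ENNReal.ofReal_inv_of_pos hc,
      ENNReal.mul_inv_cancel (by simpa using hc) ENNReal.ofReal_ne_top, one_mul]

section

variable {X Y : Type*} [MeasurableSpace X] [MeasurableSpace Y]

lemma map_fiberwise_mul_withDensity_prod_restrict (ν : Measure X) {c a : X → ℝ}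
    (hc : Measurable c) (ha : Measurable a) (ha₀ : ∀ x, 0 ≤ a x) :
    Measure.map (fun p : X × ℝ => (p.1, c p.1 * p.2))
        (((ν.withDensity fun x => ENNReal.ofReal (c x)).prod volume).restrict
          {p | 0 ≤ p.2 ∧ p.2 ≤ a p.1}) =
      (ν.prod volume).restrict {p | 0 ≤ p.2 ∧ p.2 ≤ c p.1 * a p.1} := by
  have hscale : Measurable fun p : X × ℝ => (p.1, c p.1 * p.2) :=
    measurable_fst.prodMk ((hc.comp measurable_fst).mul measurable_snd)
  have hsrc : MeasurableSet {p : X × ℝ | 0 ≤ p.2 ∧ p.2 ≤ a p.1} :=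
    (measurableSet_le measurable_const measurable_snd).inter
      (measurableSet_le measurable_snd (ha.comp measurable_fst))
  have htgt : MeasurableSet {p : X × ℝ | 0 ≤ p.2 ∧ p.2 ≤ c p.1 * a p.1} :=
    (measurableSet_le measurable_const measurable_snd).inter
      (measurableSet_le measurable_snd ((hc.mul ha).comp measurable_fst))
  ext s hs
  rw [Measure.map_apply hscale hs, Measure.restrict_apply (hscale hs),
    Measure.restrict_apply hs, Measure.prod_apply ((hscale hs).inter hsrc),
    Measure.prod_apply (hs.inter htgt),
    lintegral_withDensity_eq_lintegral_mul _ hc.ennreal_ofReal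
      (measurable_measure_prodMk_left ((hscale hs).inter hsrc))]
  exact lintegral_congr fun x =>
    ofReal_mul_volume_preimage_mul_inter_Icc (ha₀ x) (Prod.mk x ⁻¹' s)

lemma withDensity_ofReal_mul (μ : Measure X) {f g : X → ℝ} (hf : Measurable f)
    (hg : Measurable g) (hf₀ : ∀ x, 0 ≤ f x) :
    μ.withDensity (fun x => ENNReal.ofReal (f x * g x)) =
      (μ.withDensity fun x => ENNReal.ofReal (f x)).withDensity fun x => ENNReal.ofReal (g x) := by
  rw [← withDensity_mul _ hf.ennreal_ofReal hg.ennreal_ofReal]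
  congr 1 with x
  exact ENNReal.ofReal_mul (hf₀ x)

namespace MeasurableEquiv

lemma withDensity_map (e : X ≃ᵐ Y) (μ : Measure X) (g : Y → ENNReal) :
    (μ.map e).withDensity g = (μ.withDensity (g ∘ e)).map e := by
  ext s hs
  rw [withDensity_apply _ hs, Measure.map_apply e.measurable hs,
    withDensity_apply _ (e.measurable hs), e.measurableEmbedding.restrict_map,
    lintegral_map_equiv]
  rfl

lemma map_prod_restrict (e : X ≃ᵐ Y) (μ : Measure X) [SFinite μ]
    {Z : Type*} [MeasurableSpace Z] (ν : Measure Z) [SFinite ν] (T : Set (Y × Z)) :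
    ((μ.map e).prod ν).restrict T =
      ((μ.prod ν).restrict (Prod.map e id ⁻¹' T)).map (Prod.map e id) := by
  rw [← Measure.map_id (μ := ν), Measure.map_prod_map _ _ e.measurable measurable_id,
    Measure.map_id]
  exact (e.prodCongr (MeasurableEquiv.refl Z)).measurableEmbedding.restrict_map _ _

end MeasurableEquiv

end

theorem coupling_map_measure_preserving_general
    {X Y : Type*} [MeasurableSpace X] [MeasurableSpace Y]
    (m₁ : Measure X) (m₂ : Measure Y) [SigmaFinite m₁]
    (h : X ≃ᵐ Y)
    (J : X → ℝ) (hJmeas : Measurable J) (hJpos : ∀ x, 0 < J x)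
    (hm₂ : m₂ = Measure.map h (m₁.withDensity fun x => ENNReal.ofReal (J x)))
    (ρ₁ : X → ℝ)
    (ρ₂ : Y → ℝ) (hρ₂meas : Measurable ρ₂) (hρ₂ : ∀ y, 0 < ρ₂ y)
    (τα : ℝ) (hτα : 0 < τα)
    (τβ : Y → ℝ) (hτβmeas : Measurable τβ)
    (hcons : ∀ x, τβ (h x) * ρ₂ (h x) = τα * ρ₁ x / J x) :
    Measure.map (fun p : X × ℝ => ((h p.1 : Y), (τβ (h p.1) / τα) * p.2))
        (((m₁.withDensity fun x => ENNReal.ofReal (ρ₁ x)).prod volume).restrict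
          {p : X × ℝ | 0 ≤ p.2 ∧ p.2 ≤ τα}) =
      ((m₂.withDensity fun y => ENNReal.ofReal (ρ₂ y)).prod volume).restrict
        {p : Y × ℝ | 0 ≤ p.2 ∧ p.2 ≤ τβ p.1} := by
  set c : X → ℝ := fun x => τβ (h x) / τα
  have hc : Measurable c := (hτβmeas.comp h.measurable).div_const τα
  have hρ₂h : Measurable fun x => ρ₂ (h x) := hρ₂meas.comp h.measurable
  set ν := m₁.withDensity fun x => ENNReal.ofReal (J x * ρ₂ (h x))
  have hρ₁ : ρ₁ = fun x => J x * ρ₂ (h x) * c x := by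
    funext x
    have hcx := hcons x
    rw [eq_div_iff (hJpos x).ne'] at hcx
    simp only [c]; field_simp; linarith
  have hρ₁ν : m₁.withDensity (fun x => ENNReal.ofReal (ρ₁ x)) =
      ν.withDensity fun x => ENNReal.ofReal (c x) := by
    rw [hρ₁]
    exact withDensity_ofReal_mul _ (hJmeas.mul hρ₂h) hc fun x => (mul_pos (hJpos x) (hρ₂ _)).le
  have hρ₂ν : m₂.withDensity (fun y => ENNReal.ofReal (ρ₂ y)) = ν.map h := by
    rw [hm₂, h.withDensity_map]
    exact congrArg _ (withDensity_ofReal_mul _ hJmeas hρ₂h fun x => (hJpos x).le).symm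
  have hheight : ∀ x, c x * τα = τβ (h x) := fun x => div_mul_cancel₀ _ hτα.ne'
  calc _ = Measure.map (Prod.map h id) (Measure.map (fun p : X × ℝ => (p.1, c p.1 * p.2))
          (((ν.withDensity fun x => ENNReal.ofReal (c x)).prod volume).restrict
            {p : X × ℝ | 0 ≤ p.2 ∧ p.2 ≤ τα})) := by
        have hscale : Measurable fun p : X × ℝ => (p.1, c p.1 * p.2) :=
          measurable_fst.prodMk ((hc.comp measurable_fst).mul measurable_snd)
        rw [Measure.map_map (h.measurable.prodMap measurable_id) hscale, hρ₁ν]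
        rfl
    _ = ((ν.prod volume).restrict {p | 0 ≤ p.2 ∧ p.2 ≤ τβ (h p.1)}).map (Prod.map h id) := by
        rw [map_fiberwise_mul_withDensity_prod_restrict ν hc measurable_const fun _ => hτα.le]
        simp only [hheight]
    _ = _ := by rw [hρ₂ν, h.map_prod_restrict]; rfl

/-- The change-of-variables computation of Section 5.4 of the paper: the coupling map
`Θ(x,t) = (h x, (τ_β(h x)/τ_α)·t)`, with `h` a measurable equivalence of Jacobian `J`
(i.e. `m₂ = h_*(J·m₁)`) and `τ_β` determined by the consistency rule
`τ_β(h x)·ρ₂(h x) = τ_α·ρ₁(x)/J(x)`, pushes `(ρ₁·m₁) ⊗ Leb` restricted to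
`{0 ≤ t ≤ τ_α}` forward to `(ρ₂·m₂) ⊗ Leb` restricted to `{0 ≤ s ≤ τ_β}`. -/
theorem coupling_map_measure_preserving
    {X Y : Type*} [MeasurableSpace X] [MeasurableSpace Y]
    (m₁ : Measure X) (m₂ : Measure Y) [SigmaFinite m₁] [SigmaFinite m₂]
    (h : X ≃ᵐ Y)
    (J : X → ℝ) (hJmeas : Measurable J) (hJpos : ∀ x, 0 < J x)
    (hm₂ : m₂ = Measure.map h (m₁.withDensity fun x => ENNReal.ofReal (J x)))
    (ρ₁ : X → ℝ) (hρ₁meas : Measurable ρ₁) (hρ₁ : ∀ x, 0 ≤ ρ₁ x)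
    (ρ₂ : Y → ℝ) (hρ₂meas : Measurable ρ₂) (hρ₂ : ∀ y, 0 < ρ₂ y)
    (τα : ℝ) (hτα : 0 < τα)
    (τβ : Y → ℝ) (hτβmeas : Measurable τβ) (hτβ : ∀ y, 0 ≤ τβ y)
    (hcons : ∀ x, τβ (h x) * ρ₂ (h x) = τα * ρ₁ x / J x) :
    Measure.map (fun p : X × ℝ => ((h p.1 : Y), (τβ (h p.1) / τα) * p.2))
        (((m₁.withDensity fun x => ENNReal.ofReal (ρ₁ x)).prod volume).restrict
          {p : X × ℝ | 0 ≤ p.2 ∧ p.2 ≤ τα}) =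
      ((m₂.withDensity fun y => ENNReal.ofReal (ρ₂ y)).prod volume).restrict
        {p : Y × ℝ | 0 ≤ p.2 ∧ p.2 ≤ τβ p.1} :=
  coupling_map_measure_preserving_general m₁ m₂ h J hJmeas hJpos hm₂ ρ₁ ρ₂ hρ₂meas hρ₂ τα hτα τβ
    hτβmeas hcons
end

section
/- For every T ∈ (0,1) and all a, b ∈ (0, T]: |ln(1 − a) − ln(1 − b)| ≤ (T/(1 − T))·|ln a − ln b|. -/
/-!
By the mean value theorem for `log`, `min x y · |ln x − ln y| ≤ |x − y| ≤ max x y · |ln x − ln y|`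
for `x, y > 0`. Applied to `1 − a, 1 − b ≥ 1 − T` on the left and to `a, b ≤ T` on the right, it
squeezes `|a − b|` between `(1 − T)·|ln(1 − a) − ln(1 − b)|` and `T·|ln a − ln b|`.
-/

open Real

namespace Real

variable {x y : ℝ}

theorem mul_log_sub_log_le_sub (hx : 0 < x) (hy : 0 < y) : x * (log y - log x) ≤ y - x := by
  have h := log_le_sub_one_of_pos (div_pos hy hx)
  rw [log_div hy.ne' hx.ne', div_sub_one hx.ne', le_div_iff₀' hx] at h
  exact h

theorem sub_le_mul_log_sub_log (hx : 0 < x) (hy : 0 < y) : y - x ≤ y * (log y - log x) := by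
  have h := mul_log_sub_log_le_sub hy hx
  linarith

theorem min_mul_abs_log_sub_log_le (hx : 0 < x) (hy : 0 < y) :
    min x y * |log x - log y| ≤ |x - y| := by
  wlog hxy : x ≤ y generalizing x y
  · rw [min_comm, abs_sub_comm, abs_sub_comm x]
    exact this hy hx (le_of_not_ge hxy)
  rw [min_eq_left hxy, abs_sub_comm x, abs_sub_comm (log x),
    abs_of_nonneg (sub_nonneg.2 hxy), abs_of_nonneg (sub_nonneg.2 (log_le_log hx hxy))]
  exact mul_log_sub_log_le_sub hx hy

theorem abs_sub_le_max_mul_abs_log_sub_log (hx : 0 < x) (hy : 0 < y) :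
    |x - y| ≤ max x y * |log x - log y| := by
  wlog hxy : x ≤ y generalizing x y
  · rw [max_comm, abs_sub_comm, abs_sub_comm (log x)]
    exact this hy hx (le_of_not_ge hxy)
  rw [max_eq_right hxy, abs_sub_comm x, abs_sub_comm (log x),
    abs_of_nonneg (sub_nonneg.2 hxy), abs_of_nonneg (sub_nonneg.2 (log_le_log hx hxy))]
  exact sub_le_mul_log_sub_log hx hy

end Real

/-- The estimate from the proof of Lemma 5.8 of the paper: for `a, b ∈ (0, T]` with
`T < 1`, `|ln(1-a) - ln(1-b)| ≤ (T/(1-T))·|ln a - ln b|`. -/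
theorem log_one_sub_holder_transfer
    (T : ℝ) (hT : T ∈ Set.Ioo (0 : ℝ) 1) (a b : ℝ)
    (ha : a ∈ Set.Ioc (0 : ℝ) T) (hb : b ∈ Set.Ioc (0 : ℝ) T) :
    |Real.log (1 - a) - Real.log (1 - b)| ≤ (T / (1 - T)) * |Real.log a - Real.log b| := by
  obtain ⟨ha0, haT⟩ := ha
  obtain ⟨hb0, hbT⟩ := hb
  have h1T : 0 < 1 - T := sub_pos.2 hT.2
  have hmin : 1 - T ≤ min (1 - a) (1 - b) := le_min (by linarith) (by linarith)
  have hmax : max a b ≤ T := max_le haT hbT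
  have hlower := min_mul_abs_log_sub_log_le (x := 1 - a) (y := 1 - b) (by linarith) (by linarith)
  have hupper := abs_sub_le_max_mul_abs_log_sub_log ha0 hb0
  rw [sub_sub_sub_cancel_left, abs_sub_comm b] at hlower
  rw [div_mul_eq_mul_div, le_div_iff₀ h1T]
  calc |log (1 - a) - log (1 - b)| * (1 - T)
      ≤ min (1 - a) (1 - b) * |log (1 - a) - log (1 - b)| := by
        rw [mul_comm]; exact mul_le_mul_of_nonneg_right hmin (abs_nonneg _)
    _ ≤ |a - b| := hlower
    _ ≤ max a b * |log a - log b| := hupper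
    _ ≤ T * |log a - log b| := mul_le_mul_of_nonneg_right hmax (abs_nonneg _)
end
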